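/- Under the injective homomorphism φ: F⟨x_1,...,x_n⟩ → F⟨x,y⟩ given by x_i ↦ u_i + ū_i for distinct minimally balanced words u_i, a polynomial f ∈ F⟨x_1,...,x_n⟩ is irreducible if and only if φ(f) is irreducible in F⟨x,y⟩ (for f of positive degree). -/

import Mathlib

/-- The imbalance of a word over `{x,y}` (with `x = true`, `y = false`):
number of `x`'s minus number of `y`'s. -/
def imbL (m : List Bool) : ℤ := (m.count true : ℤ) - (m.count false : ℤ)

/-- A nonempty word over `{x,y}` is minimally balanced if its imbalance is `0`
and every nonempty proper prefix has strictly positive imbalance. -/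
def MinBal (m : List Bool) : Prop :=
  m ≠ [] ∧ imbL m = 0 ∧ ∀ p : List Bool, p <+: m → p ≠ [] → p ≠ m → 0 < imbL p
noncomputable section

/-- The degree of a noncommutative polynomial in the free algebra
`F⟨X⟩ = MonoidAlgebra F (FreeMonoid X)`. -/
def ncDeg {F : Type*} [Field F] {X : Type*} (f : MonoidAlgebra F (FreeMonoid X)) : ℕ :=
  f.coeff.support.sup fun m => m.length

/-- The algebra homomorphism `F⟨X⟩ → F⟨x,y⟩` determined by its values `v i`
on the variables, extended multiplicatively to monomials and linearly. -/
def phiGen {F : Type*} [Field F] {X : Type*}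
    (v : X → MonoidAlgebra F (FreeMonoid Bool)) :
    MonoidAlgebra F (FreeMonoid X) →ₐ[F] MonoidAlgebra F (FreeMonoid Bool) :=
  MonoidAlgebra.lift F _ (FreeMonoid X) (FreeMonoid.lift v)

/-- A noncommutative polynomial of positive degree is irreducible if it admits
no factorization into two factors of positive degree. -/
def NCIrreducible {F : Type*} [Field F] {X : Type*}
    (f : MonoidAlgebra F (FreeMonoid X)) : Prop :=
  ¬ ∃ g h : MonoidAlgebra F (FreeMonoid X), 0 < ncDeg g ∧ 0 < ncDeg h ∧ f = g * h

/-!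
A word over `{x,y}` has *type* `m = [i₁, …, iₖ]` if it is a concatenation `v₁ ⋯ vₖ` with
`vⱼ ∈ {u_{iⱼ}, ū_{iⱼ}}`. Minimally balanced words and their letter-swaps form a prefix code, so a
word has at most one type, and `φ(f)` is the polynomial whose coefficient at a word of type `m` is
the coefficient of `f` at `m` and which vanishes at untyped words. Hence `φ` is injective and its
image consists of the polynomials whose coefficients only depend on the type; it remains to show
that the factors of `φ(f) = G * H` are of this form.

Leading words for suitable term orders show that `G` and `H` only involve balanced words. A word
cut after a balanced prefix is typed iff both pieces are, and then the types concatenate. A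
downward induction on the length of words now shows that the coefficients of `G` only depend on
the type, by expanding the coefficient of `G * H` at `w ++ v` for a longest word `v` of `H`;
symmetrically for `H`, with a longest word of `G`.
-/

structure IsTermOrder {M W : Type*} [Mul M] [LinearOrder W] (val : M → W) : Prop where
  injective : Function.Injective val
  mul_lt_mul_left : ∀ {a b : M} (c : M), val a < val b → val (c * a) < val (c * b)
  mul_lt_mul_right : ∀ {a b : M} (c : M), val a < val b → val (a * c) < val (b * c)

namespace IsTermOrder

variable {M W : Type*} [Mul M] [LinearOrder W] {val : M → W}

theorem mul_le_mul_left (hval : IsTermOrder val) {a b : M} (c : M) (h : val a ≤ val b) :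
    val (c * a) ≤ val (c * b) := by
  rcases h.lt_or_eq with h | h
  · exact (hval.mul_lt_mul_left c h).le
  · rw [hval.injective h]

theorem mul_le_mul_right (hval : IsTermOrder val) {a b : M} (c : M) (h : val a ≤ val b) :
    val (a * c) ≤ val (b * c) := by
  rcases h.lt_or_eq with h | h
  · exact (hval.mul_lt_mul_right c h).le
  · rw [hval.injective h]

theorem comp {N : Type*} [Mul N] (hval : IsTermOrder val) (e : N →ₙ* M)
    (he : Function.Injective e) : IsTermOrder (val ∘ e) where
  injective := hval.injective.comp he
  mul_lt_mul_left c h := by simpa only [Function.comp, map_mul] using hval.mul_lt_mul_left (e c) h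
  mul_lt_mul_right c h := by simpa only [Function.comp, map_mul] using hval.mul_lt_mul_right (e c) h

theorem lex {Γ : Type*} [AddCommMonoid Γ] [LinearOrder Γ] [IsOrderedCancelAddMonoid Γ]
    (hval : IsTermOrder val) (ω : M → Γ) (hω : ∀ a b, ω (a * b) = ω a + ω b) :
    IsTermOrder fun a => toLex (ω a, val a) where
  injective a b h := hval.injective (congrArg Prod.snd (toLex.injective h))
  mul_lt_mul_left c h := by
    simp only [Prod.Lex.toLex_lt_toLex, hω] at *
    rcases h with h | ⟨h, h'⟩
    · exact Or.inl (by simpa using h)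
    · exact Or.inr ⟨by rw [h], hval.mul_lt_mul_left c h'⟩
  mul_lt_mul_right c h := by
    simp only [Prod.Lex.toLex_lt_toLex, hω] at *
    rcases h with h | ⟨h, h'⟩
    · exact Or.inl (by simpa using h)
    · exact Or.inr ⟨by rw [h], hval.mul_lt_mul_right c h'⟩

variable {R : Type*} [Semiring R] [NoZeroDivisors R]

theorem exists_leading (hval : IsTermOrder val) {G H : MonoidAlgebra R M} (hG : G ≠ 0)
    (hH : H ≠ 0) :
    ∃ a ∈ G.coeff.support, ∃ b ∈ H.coeff.support,
      (∀ a' ∈ G.coeff.support, val a' ≤ val a) ∧ (∀ b' ∈ H.coeff.support, val b' ≤ val b) ∧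
      a * b ∈ (G * H).coeff.support ∧ ∀ c ∈ (G * H).coeff.support, val c ≤ val (a * b) := by
  classical
  obtain ⟨a, ha, hamax⟩ := G.coeff.support.exists_max_image val
    (Finsupp.support_nonempty_iff.2 (mt MonoidAlgebra.coeff_eq_zero.1 hG))
  obtain ⟨b, hb, hbmax⟩ := H.coeff.support.exists_max_image val
    (Finsupp.support_nonempty_iff.2 (mt MonoidAlgebra.coeff_eq_zero.1 hH))
  have hle : ∀ a' ∈ G.coeff.support, ∀ b' ∈ H.coeff.support, val (a' * b') ≤ val (a * b) :=
    fun a' ha' b' hb' => (hval.mul_le_mul_right b' (hamax a' ha')).trans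
      (hval.mul_le_mul_left a (hbmax b' hb'))
  have hunique : UniqueMul G.coeff.support H.coeff.support a b := by
    intro a' b' ha' hb' hab
    have ha'a : a' = a := by
      by_contra hne
      have hlt := hval.mul_lt_mul_right b' ((hamax a' ha').lt_of_ne (hval.injective.ne hne))
      exact (hlt.trans_le (hval.mul_le_mul_left a (hbmax b' hb'))).ne (congrArg val hab)
    subst ha'a
    refine ⟨rfl, hval.injective (le_antisymm (hbmax b' hb') ?_)⟩
    by_contra hlt
    exact (hval.mul_lt_mul_left a' (not_le.1 hlt)).ne (congrArg val hab)
  refine ⟨a, ha, b, hb, hamax, hbmax, ?_, fun c hc => ?_⟩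
  · rw [Finsupp.mem_support_iff, MonoidAlgebra.coeff_mul_mul_of_uniqueMul hunique]
    exact mul_ne_zero (Finsupp.mem_support_iff.1 ha) (Finsupp.mem_support_iff.1 hb)
  · obtain ⟨a', ha', b', hb', rfl⟩ :=
      Finset.mem_mul.1 (MonoidAlgebra.support_coeff_mul_subset G H hc)
    exact hle a' ha' b' hb'

theorem exists_max_weight {Γ : Type*} [AddCommMonoid Γ] [LinearOrder Γ]
    [IsOrderedCancelAddMonoid Γ] (hval : IsTermOrder val) (ω : M → Γ)
    (hω : ∀ a b, ω (a * b) = ω a + ω b) {G H : MonoidAlgebra R M} (hG : G ≠ 0) (hH : H ≠ 0) :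
    ∃ a ∈ G.coeff.support, ∃ b ∈ H.coeff.support,
      (∀ a' ∈ G.coeff.support, ω a' ≤ ω a) ∧ (∀ b' ∈ H.coeff.support, ω b' ≤ ω b) ∧
      a * b ∈ (G * H).coeff.support := by
  obtain ⟨a, ha, b, hb, hamax, hbmax, hab, -⟩ := (hval.lex ω hω).exists_leading hG hH
  exact ⟨a, ha, b, hb, fun a' ha' => Prod.Lex.monotone_fst _ _ (hamax a' ha'),
    fun b' hb' => Prod.Lex.monotone_fst _ _ (hbmax b' hb'), hab⟩

end IsTermOrder

@[simp] theorem imbL_nil : imbL [] = 0 := by simp [imbL]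

@[simp] theorem imbL_append (a b : List Bool) : imbL (a ++ b) = imbL a + imbL b := by
  simp only [imbL, List.count_append]; push_cast; ring

@[simp] theorem imbL_map_not (w : List Bool) : imbL (w.map not) = -imbL w := by
  induction w with
  | nil => simp
  | cons c t ih => cases c <;> simp [imbL] at * <;> linarith

theorem MinBal.imbL_nonneg_of_prefix {m p : List Bool} (h : MinBal m) (hp : p <+: m) :
    0 ≤ imbL p := by
  by_cases hnil : p = []
  · simp [hnil]
  by_cases hpm : p = m
  · rw [hpm, h.2.1]
  · exact (h.2.2 p hp hnil hpm).le

theorem MinBal.exists_eq_true_cons {m : List Bool} (h : MinBal m) : ∃ t, m = true :: t := by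
  obtain ⟨c, t, rfl⟩ := List.exists_cons_of_ne_nil h.1
  cases c
  · have := h.imbL_nonneg_of_prefix (p := [false]) ⟨t, rfl⟩
    simp [imbL] at this
  · exact ⟨t, rfl⟩

def IsBlock (v : List Bool) : Prop := MinBal v ∨ MinBal (v.map not)

namespace IsBlock

variable {v : List Bool}

theorem ne_nil (h : IsBlock v) : v ≠ [] := by
  rcases h with h | h
  · exact h.1
  · exact fun hv => h.1 (by simp [hv])

theorem imbL_eq_zero (h : IsBlock v) : imbL v = 0 := by
  rcases h with h | h
  · exact h.2.1
  · simpa using h.2.1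

theorem imbL_ne_zero_of_prefix (h : IsBlock v) {p : List Bool} (hp : p <+: v) (hnil : p ≠ [])
    (hpv : p ≠ v) : imbL p ≠ 0 := by
  rcases h with h | h
  · exact (h.2.2 p hp hnil hpv).ne'
  · have := h.2.2 (p.map not) (hp.map not) (by simpa using hnil)
      (fun he => hpv (List.map_injective_iff.2 Bool.not_injective he))
    simp only [imbL_map_not] at this
    exact fun h0 => by omega

/-- Blocks form a prefix code. -/
theorem prefix_of_prefix (h : IsBlock v) {w z : List Bool} (hw : w ≠ []) (hw0 : imbL w = 0)
    (hvz : v <+: z) (hwz : w <+: z) : v <+: w := by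
  rcases List.prefix_or_prefix_of_prefix hvz hwz with hvw | hwv
  · exact hvw
  · by_cases hwv' : w = v
    · exact hwv' ▸ List.prefix_refl w
    · exact absurd hw0 (h.imbL_ne_zero_of_prefix hwv hw hwv')

theorem eq_of_prefix (h : IsBlock v) {v' z : List Bool} (h' : IsBlock v') (hvz : v <+: z)
    (hv'z : v' <+: z) : v = v' :=
  have hvv' := h.prefix_of_prefix h'.ne_nil h'.imbL_eq_zero hvz hv'z
  hvv'.eq_of_length (le_antisymm hvv'.length_le
    (h'.prefix_of_prefix h.ne_nil h.imbL_eq_zero hv'z hvz).length_le)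

end IsBlock

def binaryValue : List Bool → ℕ
  | [] => 0
  | b :: t => b.toNat * 2 ^ t.length + binaryValue t

theorem binaryValue_append (a b : List Bool) :
    binaryValue (a ++ b) = binaryValue a * 2 ^ b.length + binaryValue b := by
  induction a with
  | nil => simp [binaryValue]
  | cons c a ih =>
    simp only [List.cons_append, binaryValue, ih, List.length_append, pow_add]
    ring

theorem binaryValue_lt (w : List Bool) : binaryValue w < 2 ^ w.length := by
  induction w with
  | nil => simp [binaryValue]
  | cons c t ih =>
    have : c.toNat ≤ 1 := Bool.toNat_le c
    simp only [binaryValue, List.length_cons, pow_succ]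
    nlinarith

theorem eq_of_binaryValue_eq : ∀ {a b : List Bool}, a.length = b.length →
    binaryValue a = binaryValue b → a = b
  | [], [], _, _ => rfl
  | c :: a, d :: b, hl, hv => by
    simp only [List.length_cons, Nat.add_right_cancel_iff] at hl
    simp only [binaryValue, hl] at hv
    have ha := binaryValue_lt a
    have hb := binaryValue_lt b
    rw [hl] at ha
    have hcd : c = d := by
      cases c <;> cases d <;> simp at hv ⊢ <;> omega
    subst hcd
    rw [eq_of_binaryValue_eq hl (by omega)]

/-- The degree-lexicographic order, with `x > y`. -/
def deglex (w : FreeMonoid Bool) : ℕ ×ₗ ℕ := toLex (w.toList.length, binaryValue w.toList)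

theorem isTermOrder_deglex : IsTermOrder deglex where
  injective a b h := by
    simp only [deglex, toLex_inj, Prod.mk.injEq] at h
    exact FreeMonoid.toList.injective (eq_of_binaryValue_eq h.1 h.2)
  mul_lt_mul_left c h := by
    simp only [deglex, Prod.Lex.toLex_lt_toLex, FreeMonoid.toList_mul, List.length_append,
      binaryValue_append] at *
    rcases h with h | ⟨h, h'⟩
    · exact Or.inl (by omega)
    · exact Or.inr ⟨by omega, by rw [h]; omega⟩
  mul_lt_mul_right c h := by
    simp only [deglex, Prod.Lex.toLex_lt_toLex, FreeMonoid.toList_mul, List.length_append,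
      binaryValue_append] at *
    rcases h with h | ⟨h, h'⟩
    · exact Or.inl (by omega)
    · exact Or.inr ⟨by omega, Nat.add_lt_add_right
        (Nat.mul_lt_mul_of_pos_right h' (Nat.two_pow_pos _)) _⟩

theorem isTermOrder_deglex_map_not : IsTermOrder (deglex ∘ FreeMonoid.map not) :=
  isTermOrder_deglex.comp (FreeMonoid.map not).toMulHom fun a b h =>
    FreeMonoid.toList.injective (List.map_injective_iff.2 Bool.not_injective
      (by simpa using congrArg FreeMonoid.toList h))

theorem deglex_false_cons_lt_true_cons {t t' : List Bool} (h : t.length = t'.length) :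
    deglex (.ofList (false :: t)) < deglex (.ofList (true :: t')) := by
  refine Prod.Lex.toLex_lt_toLex.2 (Or.inr ⟨by simp [h], ?_⟩)
  have := binaryValue_lt t
  simp only [FreeMonoid.toList_ofList, binaryValue, Bool.toNat_false, Bool.toNat_true, h] at *
  omega

section NcDeg

variable {F X : Type*} [Field F]

theorem coeff_eq_zero_of_ncDeg_lt {P : MonoidAlgebra F (FreeMonoid X)} {w : List X}
    (h : ncDeg P < w.length) : P.coeff (.ofList w) = 0 := by
  by_contra hne
  have := Finset.le_sup (f := FreeMonoid.length) (Finsupp.mem_support_iff.2 hne)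
  exact (lt_irrefl _ (h.trans_le this))

theorem ncDeg_pos_iff {P : MonoidAlgebra F (FreeMonoid X)} :
    0 < ncDeg P ↔ ∃ w : List X, w ≠ [] ∧ P.coeff (.ofList w) ≠ 0 := by
  rw [ncDeg, Finset.lt_sup_iff]
  constructor
  · rintro ⟨w, hw, hlen⟩
    exact ⟨w.toList, List.ne_nil_of_length_pos hlen, Finsupp.mem_support_iff.1 hw⟩
  · rintro ⟨w, hw, hcoeff⟩
    exact ⟨.ofList w, Finsupp.mem_support_iff.2 hcoeff, List.length_pos_of_ne_nil hw⟩

theorem ne_zero_of_ncDeg_pos {P : MonoidAlgebra F (FreeMonoid X)} (h : 0 < ncDeg P) : P ≠ 0 := by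
  rintro rfl
  simp [ncDeg] at h

end NcDeg

namespace MonoidAlgebra

variable {R α : Type*} [Semiring R]

theorem coeff_single_mul_ofList (a : List α) (r : R) (Q : MonoidAlgebra R (FreeMonoid α))
    (w : List α) [Decidable (a <+: w)] :
    (single (FreeMonoid.ofList a) r * Q).coeff (.ofList w) =
      if a <+: w then r * Q.coeff (.ofList (w.drop a.length)) else 0 := by
  split_ifs with h
  · obtain ⟨t, rfl⟩ := h
    rw [List.drop_left]
    refine coeff_single_mul_eq_mul_coeff _ fun m' _ => ?_
    rw [← FreeMonoid.ofList_toList m', ← FreeMonoid.ofList_append]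
    simp
  · refine coeff_single_mul_of_forall_mul_ne _ _ fun d hd => h ⟨d.toList, ?_⟩
    simpa using congrArg FreeMonoid.toList hd

theorem coeff_mul_ofList (G H : MonoidAlgebra R (FreeMonoid α)) (w : List α) :
    (G * H).coeff (.ofList w) = ∑ j ∈ Finset.range (w.length + 1),
      G.coeff (.ofList (w.take j)) * H.coeff (.ofList (w.drop j)) := by
  classical
  let split (j : ℕ) : FreeMonoid α × FreeMonoid α :=
    (FreeMonoid.ofList (w.take j), FreeMonoid.ofList (w.drop j))
  have hsplit : Set.InjOn split (Finset.range (w.length + 1)) := by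
    intro j hj k hk h
    have := congrArg (fun p => p.1.toList.length) h
    simp only [split, FreeMonoid.toList_ofList, List.length_take] at this
    simp only [Finset.coe_range, Set.mem_Iio] at hj hk
    omega
  rw [coeff_mul_antidiag G H _ ((Finset.range (w.length + 1)).image split), Finset.sum_image hsplit]
  rintro ⟨a, b⟩
  simp only [Finset.mem_image, Finset.mem_range, split, Prod.mk.injEq]
  constructor
  · rintro ⟨j, -, rfl, rfl⟩
    rw [← FreeMonoid.ofList_append, List.take_append_drop]
  · intro h
    have hw : a.toList ++ b.toList = w := by simpa using congrArg FreeMonoid.toList h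
    refine ⟨a.toList.length, by simp [← hw], ?_, ?_⟩ <;> simp [← hw]

theorem coeff_mul_ofList_append_of_right {G H : MonoidAlgebra R (FreeMonoid α)} (w : List α)
    {v : List α} (hH : ∀ x : List α, v.length < x.length → H.coeff (.ofList x) = 0) :
    (G * H).coeff (.ofList (w ++ v)) = ∑ j ∈ Finset.range (v.length + 1),
      G.coeff (.ofList (w ++ v.take j)) * H.coeff (.ofList (v.drop j)) := by
  rw [coeff_mul_ofList, List.length_append, add_assoc, Finset.sum_range_add,
    Finset.sum_eq_zero, zero_add]
  · simp only [List.take_length_add_append, List.drop_length_add_append]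
  · intro j hj
    have := Finset.mem_range.1 hj
    rw [hH _ (by simp only [List.length_drop, List.length_append]; omega), mul_zero]

theorem coeff_mul_ofList_append_of_left {G H : MonoidAlgebra R (FreeMonoid α)} {w : List α}
    (v : List α) (hG : ∀ x : List α, w.length < x.length → G.coeff (.ofList x) = 0) :
    (G * H).coeff (.ofList (w ++ v)) = ∑ j ∈ Finset.range (w.length + 1),
      G.coeff (.ofList (w.take j)) * H.coeff (.ofList (w.drop j ++ v)) := by
  rw [coeff_mul_ofList, List.length_append, add_right_comm, Finset.sum_range_add,
    Finset.sum_eq_zero (s := Finset.range v.length), add_zero]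
  · refine Finset.sum_congr rfl fun j hj => ?_
    have hj : j ≤ w.length := Finset.mem_range_succ_iff.1 hj
    rw [List.take_append_of_le_length hj, List.drop_append_of_le_length hj]
  · intro j hj
    have := Finset.mem_range.1 hj
    rw [hG _ (by simp only [List.length_take, List.length_append]; omega), zero_mul]

theorem exists_longest_word {P : MonoidAlgebra R (FreeMonoid α)} (hP : P ≠ 0) :
    ∃ v : List α, P.coeff (.ofList v) ≠ 0 ∧
      ∀ x : List α, v.length < x.length → P.coeff (.ofList x) = 0 := by
  obtain ⟨v, hv, hmax⟩ := P.coeff.support.exists_max_image FreeMonoid.length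
    (Finsupp.support_nonempty_iff.2 (mt MonoidAlgebra.coeff_eq_zero.1 hP))
  refine ⟨v.toList, Finsupp.mem_support_iff.1 hv, fun x hx => ?_⟩
  by_contra hne
  exact (hmax _ (Finsupp.mem_support_iff.2 hne)).not_gt hx

end MonoidAlgebra

namespace BalancedEmbedding

variable {n : ℕ}

section Words

variable (u : Fin n → List Bool)

def block (i : Fin n) : Bool → List Bool
  | true => u i
  | false => (u i).map not

inductive HasType : List (Fin n) → List Bool → Prop
  | nil : HasType [] []
  | cons {m : List (Fin n)} {w : List Bool} (i : Fin n) (b : Bool) :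
      HasType m w → HasType (i :: m) (block u i b ++ w)

def posWord (m : List (Fin n)) : List Bool := m.flatMap u

def negWord (m : List (Fin n)) : List Bool := (posWord u m).map not

open Classical in
noncomputable def wordType (w : List Bool) : Option (List (Fin n)) :=
  if h : ∃ m, HasType u m w then some h.choose else none

variable {u}

theorem hasType_nil_iff {w : List Bool} : HasType u [] w ↔ w = [] :=
  ⟨fun h => by cases h; rfl, fun h => h ▸ .nil⟩

theorem hasType_cons_iff {i : Fin n} {m : List (Fin n)} {w : List Bool} :
    HasType u (i :: m) w ↔ ∃ b t, w = block u i b ++ t ∧ HasType u m t :=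
  ⟨fun h => by cases h with | cons _ b h => exact ⟨b, _, rfl, h⟩,
    fun ⟨b, _, hw, h⟩ => hw ▸ .cons i b h⟩

theorem wordType_eq_none_iff {w : List Bool} : wordType u w = none ↔ ∀ m, ¬HasType u m w := by
  unfold wordType
  split_ifs with h <;> simp_all

theorem block_map_not (i : Fin n) (b : Bool) : (block u i b).map not = block u i (!b) := by
  cases b <;> simp [block, Function.comp_def]

theorem hasType_posWord (m : List (Fin n)) : HasType u m (posWord u m) := by
  induction m with
  | nil => exact .nil
  | cons i m ih => exact .cons i true ih

theorem HasType.map_not {m : List (Fin n)} {w : List Bool} (h : HasType u m w) :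
    HasType u m (w.map not) := by
  induction h with
  | nil => exact .nil
  | cons i b _ ih => rw [List.map_append, block_map_not]; exact .cons i (!b) ih

theorem hasType_negWord (m : List (Fin n)) : HasType u m (negWord u m) :=
  (hasType_posWord m).map_not

theorem HasType.append {m m' : List (Fin n)} {w w' : List Bool} (h : HasType u m w)
    (h' : HasType u m' w') : HasType u (m ++ m') (w ++ w') := by
  induction h with
  | nil => exact h'
  | cons i b _ ih => rw [List.append_assoc]; exact .cons i b ih

theorem HasType.length_eq {m : List (Fin n)} {w : List Bool} (h : HasType u m w) :
    w.length = (posWord u m).length := by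
  induction h with
  | nil => rfl
  | cons i b _ ih => cases b <;> simp [block, posWord, ih] at *

variable (hmb : ∀ i, MinBal (u i))
include hmb

theorem isBlock_block (i : Fin n) (b : Bool) : IsBlock (block u i b) := by
  cases b
  · exact Or.inr (by simpa [block, Function.comp_def] using hmb i)
  · exact Or.inl (hmb i)

theorem block_eq_cons (i : Fin n) (b : Bool) : ∃ t, block u i b = b :: t := by
  obtain ⟨t, ht⟩ := (hmb i).exists_eq_true_cons
  cases b
  · exact ⟨t.map not, by simp [block, ht]⟩
  · exact ⟨t, ht⟩

theorem block_inj (hinj : Function.Injective u) {i j : Fin n} {b c : Bool}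
    (h : block u i b = block u j c) : i = j ∧ b = c := by
  obtain ⟨t, ht⟩ := block_eq_cons hmb i b
  obtain ⟨t', ht'⟩ := block_eq_cons hmb j c
  have hbc : b = c := by simpa [ht, ht'] using congrArg List.head? h
  subst hbc
  refine ⟨hinj ?_, rfl⟩
  cases b
  · exact List.map_injective_iff.2 Bool.not_injective h
  · exact h

theorem block_prefix_block_append_iff (i : Fin n) (b c : Bool) (t : List Bool) :
    block u i c <+: block u i b ++ t ↔ c = b := by
  refine ⟨fun h => ?_, fun h => h ▸ List.prefix_append _ _⟩
  obtain ⟨s, hs⟩ := block_eq_cons hmb i b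
  obtain ⟨s', hs'⟩ := block_eq_cons hmb i c
  rw [hs, hs'] at h
  exact (List.cons_prefix_cons.1 h).1

theorem HasType.imbL_eq_zero {m : List (Fin n)} {w : List Bool} (h : HasType u m w) :
    imbL w = 0 := by
  induction h with
  | nil => rfl
  | cons i b _ ih => rw [imbL_append, ih, (isBlock_block hmb i b).imbL_eq_zero, add_zero]

theorem HasType.eq_nil_iff {m : List (Fin n)} {w : List Bool} (h : HasType u m w) :
    w = [] ↔ m = [] := by
  cases h with
  | nil => simp
  | cons i b _ => simp [(isBlock_block hmb i b).ne_nil]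

theorem HasType.unique (hinj : Function.Injective u) {m m' : List (Fin n)} {w : List Bool}
    (h : HasType u m w) (h' : HasType u m' w) : m = m' := by
  induction h generalizing m' with
  | nil => exact ((h'.eq_nil_iff hmb).1 rfl).symm
  | @cons m w i b _ ih =>
    generalize hz : block u i b ++ w = z at h'
    cases h' with
    | nil => exact absurd (List.append_eq_nil_iff.1 hz).1 (isBlock_block hmb i b).ne_nil
    | cons j c h' =>
      have hblock := (isBlock_block hmb i b).eq_of_prefix (isBlock_block hmb j c)
        (hz ▸ List.prefix_append _ _) (List.prefix_append _ _)
      obtain ⟨rfl, rfl⟩ := block_inj hmb hinj hblock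
      rw [ih (List.append_cancel_left hz ▸ h')]

theorem HasType.split {m : List (Fin n)} {w p : List Bool} (h : HasType u m (w ++ p))
    (hw : imbL w = 0) : ∃ m₁ m₂, m = m₁ ++ m₂ ∧ HasType u m₁ w ∧ HasType u m₂ p := by
  generalize hz : w ++ p = z at h
  induction h generalizing w with
  | nil =>
    obtain ⟨rfl, rfl⟩ := List.append_eq_nil_iff.1 hz
    exact ⟨[], [], rfl, .nil, .nil⟩
  | @cons m t i b ht ih =>
    by_cases hnil : w = []
    · subst hnil
      exact ⟨[], i :: m, rfl, .nil, by simpa [← hz] using HasType.cons i b ht⟩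
    obtain ⟨w', rfl⟩ := (isBlock_block hmb i b).prefix_of_prefix hnil hw
      (List.prefix_append _ _) (hz ▸ List.prefix_append _ _)
    rw [List.append_assoc] at hz
    obtain ⟨m₁, m₂, rfl, h₁, h₂⟩ := ih (w := w')
      (by rwa [imbL_append, (isBlock_block hmb i b).imbL_eq_zero, zero_add] at hw)
      (List.append_cancel_left hz)
    exact ⟨i :: m₁, m₂, rfl, .cons i b h₁, h₂⟩

theorem imbL_nonneg_of_prefix_posWord {m : List (Fin n)} {p : List Bool}
    (hp : p <+: posWord u m) : 0 ≤ imbL p := by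
  induction m generalizing p with
  | nil => simp_all [posWord]
  | cons i m ih =>
    rw [posWord, List.flatMap_cons] at hp
    rcases List.prefix_or_prefix_of_prefix hp (List.prefix_append (u i) _) with hp' | ⟨q, rfl⟩
    · exact (hmb i).imbL_nonneg_of_prefix hp'
    · rw [List.prefix_append_right_inj] at hp
      rw [imbL_append, (hmb i).2.1, zero_add]
      exact ih hp

theorem imbL_nonpos_of_prefix_negWord {m : List (Fin n)} {p : List Bool}
    (hp : p <+: negWord u m) : imbL p ≤ 0 := by
  have := imbL_nonneg_of_prefix_posWord hmb (p := p.map not) (by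
    simpa [negWord, List.map_map, Function.comp_def] using hp.map not)
  rwa [imbL_map_not, neg_nonneg] at this

theorem deglex_le_posWord {m : List (Fin n)} {w : List Bool} (h : HasType u m w) :
    deglex (.ofList w) ≤ deglex (.ofList (posWord u m)) := by
  induction h with
  | nil => rfl
  | @cons m w i b hw ih =>
    change deglex (.ofList (block u i b ++ w)) ≤ deglex (.ofList (u i ++ posWord u m))
    cases b
    · obtain ⟨t, ht⟩ := (hmb i).exists_eq_true_cons
      simp only [block, ht, List.map_cons, Bool.not_true, List.cons_append]
      exact (deglex_false_cons_lt_true_cons (by simp [hw.length_eq])).le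
    · exact isTermOrder_deglex.mul_le_mul_left (.ofList (u i)) ih

theorem deglex_map_not_le_negWord {m : List (Fin n)} {w : List Bool} (h : HasType u m w) :
    (deglex ∘ FreeMonoid.map not) (.ofList w) ≤
      (deglex ∘ FreeMonoid.map not) (.ofList (negWord u m)) := by
  change deglex (.ofList (w.map not)) ≤ deglex (.ofList (((posWord u m).map not).map not))
  simpa [Function.comp_def] using deglex_le_posWord hmb h.map_not

variable (hinj : Function.Injective u)
include hinj

theorem wordType_eq_some_iff {w : List Bool} {m : List (Fin n)} :
    wordType u w = some m ↔ HasType u m w := by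
  unfold wordType
  split_ifs with h
  · exact ⟨fun he => Option.some_inj.1 he ▸ h.choose_spec,
      fun hm => congrArg some (h.choose_spec.unique hmb hinj hm)⟩
  · simp_all

theorem wordType_posWord (m : List (Fin n)) : wordType u (posWord u m) = some m :=
  (wordType_eq_some_iff hmb hinj).2 (hasType_posWord m)

theorem wordType_append {w : List Bool} (p : List Bool) (hw : imbL w = 0) :
    wordType u (w ++ p) = Option.map₂ (· ++ ·) (wordType u w) (wordType u p) := by
  cases hwm : wordType u w with
  | some m₁ =>
    cases hpm : wordType u p with
    | some m₂ =>
      exact (wordType_eq_some_iff hmb hinj).2 (((wordType_eq_some_iff hmb hinj).1 hwm).append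
        ((wordType_eq_some_iff hmb hinj).1 hpm))
    | none =>
      refine wordType_eq_none_iff.2 fun m h => ?_
      obtain ⟨_, m₂, -, -, h₂⟩ := h.split hmb hw
      exact wordType_eq_none_iff.1 hpm m₂ h₂
  | none =>
    refine wordType_eq_none_iff.2 fun m h => ?_
    obtain ⟨m₁, -, -, h₁, -⟩ := h.split hmb hw
    exact wordType_eq_none_iff.1 hwm m₁ h₁

theorem posWord_injective : Function.Injective (posWord u) :=
  fun _ _ h => (hasType_posWord _).unique hmb hinj (h ▸ hasType_posWord _)

end Words

section Polynomials

variable {u : Fin n → List Bool} {F : Type*} [Field F]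

variable (u) in
/-- The map `φ : x_i ↦ u_i + ū_i`. -/
def embed : MonoidAlgebra F (FreeMonoid (Fin n)) →ₐ[F] MonoidAlgebra F (FreeMonoid Bool) :=
  phiGen fun i =>
    MonoidAlgebra.of F _ (.ofList (u i)) + MonoidAlgebra.of F _ (.ofList ((u i).map not))

theorem embed_of_of (i : Fin n) :
    embed u (MonoidAlgebra.of F _ (FreeMonoid.of i)) =
      MonoidAlgebra.single (.ofList (block u i true)) 1 +
        MonoidAlgebra.single (.ofList (block u i false)) 1 := by
  rw [embed, phiGen, MonoidAlgebra.lift_of, FreeMonoid.lift_eval_of]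
  rfl

open Classical in
theorem coeff_embed_of (hmb : ∀ i, MinBal (u i)) (m : List (Fin n)) (w : List Bool) :
    (embed u (MonoidAlgebra.of F _ (.ofList m))).coeff (.ofList w) =
      if HasType u m w then 1 else 0 := by
  induction m generalizing w with
  | nil =>
    rw [FreeMonoid.ofList_nil, map_one, map_one, MonoidAlgebra.one_def, MonoidAlgebra.coeff_single,
      Finsupp.single_apply, hasType_nil_iff]
    simp [← FreeMonoid.ofList_nil]
  | cons i m ih =>
    rw [FreeMonoid.ofList_cons, map_mul, map_mul, embed_of_of, add_mul, MonoidAlgebra.coeff_add,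
      Finsupp.add_apply, MonoidAlgebra.coeff_single_mul_ofList,
      MonoidAlgebra.coeff_single_mul_ofList, ih, ih]
    by_cases hw : ∃ b t, w = block u i b ++ t
    · obtain ⟨b, t, rfl⟩ := hw
      have htype : HasType u (i :: m) (block u i b ++ t) ↔ HasType u m t := by
        refine hasType_cons_iff.trans ⟨fun ⟨c, t', he, ht'⟩ => ?_, fun ht => ⟨b, t, rfl, ht⟩⟩
        obtain rfl := (block_prefix_block_append_iff hmb i b c t).1 (he ▸ List.prefix_append _ _)
        rwa [List.append_cancel_left he]
      cases b <;> simp [block_prefix_block_append_iff hmb, htype]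
    · have hpre (b : Bool) : ¬block u i b <+: w := fun ⟨t, ht⟩ => hw ⟨b, t, ht.symm⟩
      have htype : ¬HasType u (i :: m) w := fun h =>
        let ⟨b, t, ht, _⟩ := hasType_cons_iff.1 h; hw ⟨b, t, ht⟩
      simp [hpre, htype]

variable (u) in
/-- The common coefficient of the words of type `o` in a typed polynomial. -/
def typeCoeff (P : MonoidAlgebra F (FreeMonoid Bool)) (o : Option (List (Fin n))) : F :=
  o.elim 0 fun m => P.coeff (.ofList (posWord u m))

variable (u) in
/-- Characterizes the image of `embed u`. -/
def IsTyped (P : MonoidAlgebra F (FreeMonoid Bool)) : Prop :=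
  ∀ w, P.coeff (.ofList w) = typeCoeff u P (wordType u w)

def IsBalanced (P : MonoidAlgebra F (FreeMonoid Bool)) : Prop :=
  ∀ w, imbL w ≠ 0 → P.coeff (.ofList w) = 0

@[simp] theorem typeCoeff_none (P : MonoidAlgebra F (FreeMonoid Bool)) :
    typeCoeff u P none = 0 := rfl

theorem IsTyped.coeff_eq_of_hasType {P : MonoidAlgebra F (FreeMonoid Bool)} (hP : IsTyped u P)
    (hmb : ∀ i, MinBal (u i)) (hinj : Function.Injective u) {m : List (Fin n)} {w : List Bool}
    (h : HasType u m w) : P.coeff (.ofList w) = P.coeff (.ofList (posWord u m)) := by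
  rw [hP w, (wordType_eq_some_iff hmb hinj).2 h, typeCoeff, Option.elim_some]

theorem IsTyped.hasType_of_coeff_ne_zero {P : MonoidAlgebra F (FreeMonoid Bool)}
    (hP : IsTyped u P) {w : List Bool} (hw : P.coeff (.ofList w) ≠ 0) : ∃ m, HasType u m w := by
  by_contra h
  rw [hP w, wordType_eq_none_iff.2 (not_exists.1 h), typeCoeff_none] at hw
  exact hw rfl

theorem IsTyped.imbL_eq_zero_of_mem_support {P : MonoidAlgebra F (FreeMonoid Bool)}
    (hP : IsTyped u P) (hmb : ∀ i, MinBal (u i)) {w : FreeMonoid Bool}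
    (hw : w ∈ P.coeff.support) : imbL w.toList = 0 :=
  let ⟨_, hm⟩ := hP.hasType_of_coeff_ne_zero (w := w.toList) (Finsupp.mem_support_iff.1 hw)
  hm.imbL_eq_zero hmb

variable (hmb : ∀ i, MinBal (u i)) (hinj : Function.Injective u)
include hmb hinj

theorem coeff_embed (f : MonoidAlgebra F (FreeMonoid (Fin n))) (w : List Bool) :
    (embed u f).coeff (.ofList w) = (wordType u w).elim 0 fun m => f.coeff (.ofList m) := by
  classical
  induction f using MonoidAlgebra.induction_linear with
  | zero => cases wordType u w <;> simp
  | add f g hf hg =>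
    rw [map_add, MonoidAlgebra.coeff_add, Finsupp.add_apply, hf, hg]
    cases wordType u w <;> simp
  | single m r =>
    have hsingle : MonoidAlgebra.single m r = r • MonoidAlgebra.of F _ (.ofList m.toList) := by
      simp
    rw [hsingle, map_smul, MonoidAlgebra.coeff_smul, Finsupp.smul_apply, coeff_embed_of hmb]
    cases hw : wordType u w with
    | none => simp [wordType_eq_none_iff.1 hw]
    | some m' =>
      have hm' := (wordType_eq_some_iff hmb hinj).1 hw
      have : HasType u m.toList w ↔ m = .ofList m' :=
        ⟨fun h => by rw [← h.unique hmb hinj hm']; rfl, fun h => by subst h; exact hm'⟩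
      simp [this, MonoidAlgebra.coeff_single, Finsupp.single_apply]

theorem coeff_embed_posWord (f : MonoidAlgebra F (FreeMonoid (Fin n))) (m : List (Fin n)) :
    (embed u f).coeff (.ofList (posWord u m)) = f.coeff (.ofList m) := by
  rw [coeff_embed hmb hinj, wordType_posWord hmb hinj, Option.elim_some]

theorem isTyped_embed (f : MonoidAlgebra F (FreeMonoid (Fin n))) : IsTyped u (embed u f) := by
  intro w
  rw [coeff_embed hmb hinj]
  cases wordType u w <;> simp [typeCoeff, coeff_embed_posWord hmb hinj]

theorem embed_injective : Function.Injective (embed (F := F) u) := by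
  intro f g h
  ext m
  rw [← FreeMonoid.ofList_toList m, ← coeff_embed_posWord hmb hinj, h,
    coeff_embed_posWord hmb hinj]

theorem IsTyped.exists_embed_eq {P : MonoidAlgebra F (FreeMonoid Bool)} (hP : IsTyped u P) :
    ∃ g, embed u g = P := by
  let coe (m : FreeMonoid (Fin n)) : FreeMonoid Bool := .ofList (posWord u m.toList)
  have hcoe : coe.Injective := fun a b h =>
    FreeMonoid.toList.injective (posWord_injective hmb hinj (FreeMonoid.ofList.injective h))
  refine ⟨MonoidAlgebra.ofCoeff (P.coeff.comapDomain coe hcoe.injOn), ?_⟩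
  ext w
  rw [← FreeMonoid.ofList_toList w, coeff_embed hmb hinj, hP]
  cases wordType u w.toList <;> simp [typeCoeff, coe, Finsupp.comapDomain_apply]

end Polynomials

section Factors

open Finset

variable {u : Fin n → List Bool} {F : Type*} [Field F] {G H : MonoidAlgebra F (FreeMonoid Bool)}
variable (hmb : ∀ i, MinBal (u i))
include hmb

/-- The words of maximal imbalance of `G` and of `H` multiply to a word of `G * H`, which is
balanced; likewise for minimal imbalance. -/
theorem exists_imbL_eq_of_isTyped_mul (hGH : IsTyped u (G * H)) (hG : G ≠ 0) (hH : H ≠ 0) :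
    ∃ c : ℤ, (∀ a ∈ G.coeff.support, imbL a.toList = c) ∧
      ∀ b ∈ H.coeff.support, imbL b.toList = -c := by
  let ω (w : FreeMonoid Bool) : ℤ := imbL w.toList
  have hω (a b : FreeMonoid Bool) : ω (a * b) = ω a + ω b := by simp [ω]
  obtain ⟨a₁, ha₁, b₁, hb₁, hGmax, hHmax, hab₁⟩ :=
    isTermOrder_deglex.exists_max_weight ω hω hG hH
  obtain ⟨a₀, ha₀, b₀, hb₀, hGmin, hHmin, hab₀⟩ :=
    isTermOrder_deglex.exists_max_weight (-ω) (fun a b => by simp [hω, add_comm]) hG hH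
  have hGω (a) (ha : a ∈ G.coeff.support) : ω a₀ ≤ ω a ∧ ω a ≤ ω a₁ :=
    ⟨neg_le_neg_iff.1 (hGmin a ha), hGmax a ha⟩
  have hHω (b) (hb : b ∈ H.coeff.support) : ω b₀ ≤ ω b ∧ ω b ≤ ω b₁ :=
    ⟨neg_le_neg_iff.1 (hHmin b hb), hHmax b hb⟩
  have h₁ : ω a₁ + ω b₁ = 0 := hω a₁ b₁ ▸ hGH.imbL_eq_zero_of_mem_support hmb hab₁
  have h₀ : ω a₀ + ω b₀ = 0 := hω a₀ b₀ ▸ hGH.imbL_eq_zero_of_mem_support hmb hab₀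
  have ha₀₁ := (hGω a₀ ha₀).2
  have hb₀₁ := (hHω b₀ hb₀).2
  refine ⟨ω a₁, fun a ha => ?_, fun b hb => ?_⟩
  · have := hGω a ha
    change ω a = ω a₁
    omega
  · have := hHω b hb
    change ω b = -ω a₁
    omega

variable (hinj : Function.Injective u)
include hinj

/-- If `top m` is the largest word of type `m` for a term order, then the leading word of
`G * H` is some `top m`, so the leading word of `G` is a prefix of it. -/
theorem exists_prefix_of_isTyped_mul {W : Type*} [LinearOrder W] {val : FreeMonoid Bool → W}
    (hval : IsTermOrder val) (top : List (Fin n) → List Bool) (htop : ∀ m, HasType u m (top m))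
    (hmax : ∀ m w, HasType u m w → val (.ofList w) ≤ val (.ofList (top m)))
    (hGH : IsTyped u (G * H)) (hG : G ≠ 0) (hH : H ≠ 0) :
    ∃ a ∈ G.coeff.support, ∃ m, a.toList <+: top m := by
  obtain ⟨a, ha, b, -, -, -, hab, hleading⟩ := hval.exists_leading hG hH
  obtain ⟨m, hm⟩ := hGH.hasType_of_coeff_ne_zero (w := (a * b).toList)
    (Finsupp.mem_support_iff.1 hab)
  have htop_mem : FreeMonoid.ofList (top m) ∈ (G * H).coeff.support := by
    rw [Finsupp.mem_support_iff, hGH.coeff_eq_of_hasType hmb hinj (htop m),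
      ← hGH.coeff_eq_of_hasType hmb hinj hm]
    exact Finsupp.mem_support_iff.1 hab
  have htop_eq : a * b = .ofList (top m) :=
    hval.injective (le_antisymm (hmax m _ hm) (hleading _ htop_mem))
  exact ⟨a, ha, m, b.toList, by rw [← FreeMonoid.toList_mul, htop_eq]; rfl⟩

/-- The common imbalance of the words of `G` is `≥ 0` by a prefix of some `posWord u m`, and
`≤ 0` by a prefix of some `negWord u m`. -/
theorem isBalanced_of_isTyped_mul (hGH : IsTyped u (G * H)) (hG : G ≠ 0) (hH : H ≠ 0) :
    IsBalanced G ∧ IsBalanced H := by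
  obtain ⟨c, hGc, hHc⟩ := exists_imbL_eq_of_isTyped_mul hmb hGH hG hH
  obtain ⟨a, ha, m, ham⟩ := exists_prefix_of_isTyped_mul hmb hinj isTermOrder_deglex
    (posWord u) hasType_posWord (fun _ _ => deglex_le_posWord hmb) hGH hG hH
  obtain ⟨a', ha', m', ham'⟩ := exists_prefix_of_isTyped_mul hmb hinj isTermOrder_deglex_map_not
    (negWord u) hasType_negWord (fun _ _ => deglex_map_not_le_negWord hmb) hGH hG hH
  have hc : c = 0 := by
    have hpos := hGc a ha ▸ imbL_nonneg_of_prefix_posWord hmb ham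
    have hneg := hGc a' ha' ▸ imbL_nonpos_of_prefix_negWord hmb ham'
    omega
  subst hc
  refine ⟨fun w hw => ?_, fun w hw => ?_⟩ <;> by_contra hne
  · exact hw (hGc _ (Finsupp.mem_support_iff.2 hne))
  · exact hw (by simpa using hHc _ (Finsupp.mem_support_iff.2 hne))

/-- Downward induction on the length of words: it suffices that, at each balanced word `w`, a
fixed nonzero multiple of the coefficient is a function of the type of `w`, once the coefficients
at all longer words are known to be. -/
theorem isTyped_of_mul_coeff_eq {P : MonoidAlgebra F (FreeMonoid Bool)} (hP : IsBalanced P)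
    {a : F} (ha : a ≠ 0) (R : Option (List (Fin n)) → F) (hR : R none = 0)
    (step : ∀ w, imbL w = 0 →
      (∀ x, w.length < x.length → P.coeff (.ofList x) = typeCoeff u P (wordType u x)) →
      a * P.coeff (.ofList w) = R (wordType u w)) :
    IsTyped u P := by
  suffices ∀ k w, ncDeg P < w.length + k →
      P.coeff (.ofList w) = typeCoeff u P (wordType u w) from
    fun w => this (ncDeg P + 1) w (by omega)
  intro k
  induction k with
  | zero =>
    intro w hw
    cases hwt : wordType u w with
    | none => exact coeff_eq_zero_of_ncDeg_lt hw
    | some m =>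
      have hlen := ((wordType_eq_some_iff hmb hinj).1 hwt).length_eq
      rw [typeCoeff, Option.elim_some, coeff_eq_zero_of_ncDeg_lt hw,
        coeff_eq_zero_of_ncDeg_lt (by omega)]
  | succ k ih =>
    intro w hw
    have ih' (x : List Bool) (hx : w.length < x.length) := ih x (by omega)
    by_cases hw0 : imbL w = 0
    swap
    · rw [hP w hw0, wordType_eq_none_iff.2 fun m h => hw0 (h.imbL_eq_zero hmb), typeCoeff_none]
    have hstep := step w hw0 ih'
    cases hwt : wordType u w with
    | none =>
      rw [hwt, hR] at hstep
      exact (mul_eq_zero.1 hstep).resolve_left ha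
    | some m =>
      have hlen := ((wordType_eq_some_iff hmb hinj).1 hwt).length_eq
      have hpos := step (posWord u m) ((hasType_posWord m).imbL_eq_zero hmb)
        fun x hx => ih' x (by omega)
      rw [wordType_posWord hmb hinj, ← hwt, ← hstep] at hpos
      exact (mul_left_cancel₀ ha hpos).symm

/-- Expand the coefficient of `G * H` at `w ++ v`, with `v` a longest word of `H`. -/
theorem IsTyped.of_mul_left (hGH : IsTyped u (G * H)) (hGbal : IsBalanced G) (hH : H ≠ 0) :
    IsTyped u G := by
  obtain ⟨v, hv, hvlong⟩ := MonoidAlgebra.exists_longest_word hH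
  refine isTyped_of_mul_coeff_eq hmb hinj hGbal hv
    (fun o => typeCoeff u (G * H) (o.map₂ (· ++ ·) (wordType u v)) -
      ∑ j ∈ range v.length, typeCoeff u G (o.map₂ (· ++ ·) (wordType u (v.take (j + 1)))) *
        H.coeff (.ofList (v.drop (j + 1)))) (by simp) fun w hw ih => ?_
  have hexp := MonoidAlgebra.coeff_mul_ofList_append_of_right (G := G) w hvlong
  rw [sum_range_succ', List.take_zero, List.append_nil, List.drop_zero, hGH,
    wordType_append hmb hinj _ hw] at hexp
  have hsum : ∑ j ∈ range v.length,
      G.coeff (.ofList (w ++ v.take (j + 1))) * H.coeff (.ofList (v.drop (j + 1))) =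
      ∑ j ∈ range v.length, typeCoeff u G ((wordType u w).map₂ (· ++ ·)
        (wordType u (v.take (j + 1)))) * H.coeff (.ofList (v.drop (j + 1))) := by
    refine sum_congr rfl fun j hj => ?_
    have := mem_range.1 hj
    rw [ih _ (by simp only [List.length_append, List.length_take]; omega),
      wordType_append hmb hinj _ hw]
  rw [hexp, hsum]
  ring

/-- Expand the coefficient of `G * H` at `w ++ v`, with `w` a longest word of `G`. -/
theorem IsTyped.of_mul_right (hGH : IsTyped u (G * H)) (hGbal : IsBalanced G)
    (hHbal : IsBalanced H) (hG : G ≠ 0) : IsTyped u H := by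
  obtain ⟨w, hw, hwlong⟩ := MonoidAlgebra.exists_longest_word hG
  have hw0 : imbL w = 0 := by_contra fun h => hw (hGbal w h)
  refine isTyped_of_mul_coeff_eq hmb hinj hHbal hw
    (fun o => typeCoeff u (G * H) ((wordType u w).map₂ (· ++ ·) o) -
      ∑ j ∈ range w.length, G.coeff (.ofList (w.take j)) *
        typeCoeff u H ((wordType u (w.drop j)).map₂ (· ++ ·) o)) (by simp) fun v hv ih => ?_
  have hexp := MonoidAlgebra.coeff_mul_ofList_append_of_left (H := H) v hwlong
  rw [sum_range_succ, hGH, wordType_append hmb hinj _ hw0, List.take_length, List.drop_length,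
    List.nil_append] at hexp
  have hsum : ∑ j ∈ range w.length,
      G.coeff (.ofList (w.take j)) * H.coeff (.ofList (w.drop j ++ v)) =
      ∑ j ∈ range w.length, G.coeff (.ofList (w.take j)) *
        typeCoeff u H ((wordType u (w.drop j)).map₂ (· ++ ·) (wordType u v)) := by
    refine sum_congr rfl fun j hj => ?_
    by_cases htake : imbL (w.take j) = 0
    · have hdrop : imbL (w.drop j) = 0 := by
        rw [← List.take_append_drop j w, imbL_append, htake, zero_add] at hw0
        exact hw0
      have := mem_range.1 hj
      rw [ih _ (by simp only [List.length_append, List.length_drop]; omega),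
        wordType_append hmb hinj _ hdrop]
    · rw [hGbal _ htake, zero_mul, zero_mul]
  rw [hexp, hsum]
  ring

theorem exists_embed_eq_of_embed_eq_mul {f : MonoidAlgebra F (FreeMonoid (Fin n))}
    (h : embed u f = G * H) (hG : G ≠ 0) (hH : H ≠ 0) :
    (∃ g, embed u g = G) ∧ ∃ h, embed u h = H := by
  have hGH : IsTyped u (G * H) := h ▸ isTyped_embed hmb hinj f
  obtain ⟨hGbal, hHbal⟩ := isBalanced_of_isTyped_mul hmb hinj hGH hG hH
  exact ⟨(hGH.of_mul_left hmb hinj hGbal hH).exists_embed_eq hmb hinj,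
    (hGH.of_mul_right hmb hinj hGbal hHbal hG).exists_embed_eq hmb hinj⟩

theorem ncDeg_embed_pos_iff {g : MonoidAlgebra F (FreeMonoid (Fin n))} :
    0 < ncDeg (embed u g) ↔ 0 < ncDeg g := by
  simp only [ncDeg_pos_iff]
  constructor
  · rintro ⟨w, hw, hcoeff⟩
    rw [coeff_embed hmb hinj] at hcoeff
    cases hwt : wordType u w with
    | none => simp [hwt] at hcoeff
    | some m =>
      rw [hwt, Option.elim_some] at hcoeff
      exact ⟨m, mt (((wordType_eq_some_iff hmb hinj).1 hwt).eq_nil_iff hmb).2 hw, hcoeff⟩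
  · rintro ⟨m, hm, hcoeff⟩
    exact ⟨posWord u m, mt ((hasType_posWord m).eq_nil_iff hmb).1 hm,
      by rwa [coeff_embed_posWord hmb hinj]⟩

end Factors

end BalancedEmbedding

open BalancedEmbedding in
theorem irreducible_iff_image_irreducible_general (F : Type*) [Field F] (n : ℕ)
    (u : Fin n → List Bool) (hinj : Function.Injective u) (hmb : ∀ i, MinBal (u i))
    (f : MonoidAlgebra F (FreeMonoid (Fin n))) :
    NCIrreducible f ↔
      NCIrreducible (phiGen (F := F) (fun i : Fin n =>
        MonoidAlgebra.of F (FreeMonoid Bool) (FreeMonoid.ofList (u i)) +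
        MonoidAlgebra.of F (FreeMonoid Bool) (FreeMonoid.ofList ((u i).map not))) f) := by
  change NCIrreducible f ↔ NCIrreducible (embed u f)
  constructor
  · rintro hf ⟨G, H, hG, hH, hGH⟩
    obtain ⟨⟨g, rfl⟩, ⟨h, rfl⟩⟩ := exists_embed_eq_of_embed_eq_mul hmb hinj hGH
      (ne_zero_of_ncDeg_pos hG) (ne_zero_of_ncDeg_pos hH)
    rw [ncDeg_embed_pos_iff hmb hinj] at hG hH
    exact hf ⟨g, h, hG, hH, embed_injective hmb hinj (by rw [hGH, map_mul])⟩
  · rintro hf ⟨g, h, hg, hh, rfl⟩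
    exact hf ⟨embed u g, embed u h, (ncDeg_embed_pos_iff hmb hinj).2 hg,
      (ncDeg_embed_pos_iff hmb hinj).2 hh, map_mul _ _ _⟩

/-- Under the embedding `φ : x_i ↦ u_i + ū_i` (`u_i` distinct minimally balanced
words, `ū_i` their letter-swaps), a polynomial `f` of positive degree is
irreducible in `F⟨x₁,…,xₙ⟩` if and only if `φ(f)` is irreducible in `F⟨x,y⟩`. -/
theorem irreducible_iff_image_irreducible (F : Type*) [Field F] (n : ℕ)
    (u : Fin n → List Bool) (hinj : Function.Injective u) (hmb : ∀ i, MinBal (u i))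
    (f : MonoidAlgebra F (FreeMonoid (Fin n))) (hf : 0 < ncDeg f) :
    NCIrreducible f ↔
      NCIrreducible (phiGen (F := F) (fun i : Fin n =>
        MonoidAlgebra.of F (FreeMonoid Bool) (FreeMonoid.ofList (u i)) +
        MonoidAlgebra.of F (FreeMonoid Bool) (FreeMonoid.ofList ((u i).map not))) f) :=
  irreducible_iff_image_irreducible_general F n u hinj hmb f
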